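/- arXiv:2012.11062 — 3 statements merged into one kernel-verified Lean document; each statement's English description precedes it below -/
import Mathlib

section
/- Let U be a set of points in the Euclidean plane ℝ² and let a ≠ b be two points such that the closed segment [a,b] is contained in the frontier of the convex hull of U. Then there exists a nonzero vector n with ⟪b − a, n⟫ = 0 such that every point u of U satisfies ⟪u − a, n⟫ ≤ 0; that is, U is entirely contained in one of the two closed half-planes bounded by the line through a and b. -/
open RealInnerProductSpace

/-- If a nondegenerate segment `[a,b]` lies on the frontier of the convex hull of a
set `U` of points of the plane, then `U` lies entirely in one of the two closed
half-planes bounded by the supporting line of `[a,b]`: there is a nonzero normal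
vector `n` orthogonal to `b - a` with `⟪u - a, n⟫ ≤ 0` for all `u ∈ U`. -/
theorem segment_on_hull_boundary_supporting_halfplane
    (U : Set (EuclideanSpace ℝ (Fin 2))) (a b : EuclideanSpace ℝ (Fin 2))
    (hab : a ≠ b)
    (hseg : segment ℝ a b ⊆ frontier (convexHull ℝ U)) :
    ∃ n : EuclideanSpace ℝ (Fin 2), n ≠ 0 ∧ ⟪b - a, n⟫ = 0 ∧
      ∀ u ∈ U, ⟪u - a, n⟫ ≤ 0 := by
  set C := convexHull ℝ U with hCdef
  have hC : Convex ℝ C := convex_convexHull ℝ U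
  have haC : a ∈ closure C :=
    frontier_subset_closure (hseg (left_mem_segment ℝ a b))
  have hbC : b ∈ closure C :=
    frontier_subset_closure (hseg (right_mem_segment ℝ a b))
  by_cases hi : (interior C).Nonempty
  · -- supporting hyperplane via Hahn-Banach at the midpoint
    set m := midpoint ℝ a b with hmdef
    have hmfr : m ∈ frontier C := hseg (midpoint_mem_segment a b)
    have hmnot : m ∉ interior C := hmfr.2
    obtain ⟨f, hf⟩ := geometric_hahn_banach_open_point hC.interior isOpen_interior hmnot
    have hle : ∀ u ∈ closure C, f u ≤ f m := by
      obtain ⟨y, hy⟩ := hi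
      intro u hu
      have hlt : ∀ t : ℝ, t ∈ Set.Ioo (0:ℝ) 1 → f ((1 - t) • y + t • u) < f m := by
        intro t ht
        exact hf _ (hC.combo_interior_closure_mem_interior hy hu
          (by linarith [ht.2]) ht.1.le (by ring))
      haveI := right_nhdsWithin_Ioo_neBot (show (0:ℝ) < 1 by norm_num)
      have htend : Filter.Tendsto (fun t : ℝ => f ((1 - t) • y + t • u))
          (nhdsWithin 1 (Set.Ioo 0 1)) (nhds (f u)) := by
        have hcont : Continuous (fun t : ℝ => f ((1 - t) • y + t • u)) := by
          continuity
        have := hcont.tendsto 1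
        simp only [sub_self, zero_smul, one_smul, zero_add] at this
        exact this.mono_left nhdsWithin_le_nhds
      exact le_of_tendsto htend (Filter.eventually_of_mem self_mem_nhdsWithin
        (fun t ht => (hlt t ht).le))
    have hfm : 2 * f m = f a + f b := by
      have : m = (2:ℝ)⁻¹ • (a + b) := by
        rw [hmdef, midpoint_eq_smul_add]; norm_num
      rw [this, map_smul, map_add]
      simp only [smul_eq_mul]
      ring
    have hfa : f a = f m := by
      have h1 := hle a haC
      have h2 := hle b hbC
      linarith
    have hfb : f b = f m := by
      have h1 := hle a haC
      have h2 := hle b hbC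
      linarith
    have hfne : f ≠ 0 := by
      obtain ⟨y, hy⟩ := hi
      intro h
      have := hf y hy
      simp [h] at this
    refine ⟨(InnerProductSpace.toDual ℝ (EuclideanSpace ℝ (Fin 2))).symm f, ?_, ?_, ?_⟩
    · simp only [ne_eq, AddEquivClass.map_eq_zero_iff]
      exact hfne
    · rw [real_inner_comm, InnerProductSpace.toDual_symm_apply, map_sub, hfa, hfb]
      ring
    · intro u hu
      rw [real_inner_comm, InnerProductSpace.toDual_symm_apply, map_sub, hfa]
      have : f u ≤ f m := hle u (subset_closure (subset_convexHull ℝ U hu))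
      linarith
  · -- degenerate case: the hull lies in a line
    have hCne : C.Nonempty := by
      rcases Set.eq_empty_or_nonempty C with h | h
      · rw [h] at haC; simp at haC
      · exact h
    have hspan : affineSpan ℝ C ≠ ⊤ := by
      intro h
      exact hi ((hC.interior_nonempty_iff_affineSpan_eq_top).mpr h)
    have hdir : (affineSpan ℝ C).direction ≠ ⊤ := by
      intro h
      exact hspan ((AffineSubspace.direction_eq_top_iff_of_nonempty
        ((affineSpan_nonempty ℝ).mpr hCne)).mp h)
    have horth : (affineSpan ℝ C).directionᗮ ≠ ⊥ := by
      intro h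
      exact hdir (Submodule.orthogonal_eq_bot_iff.mp h)
    obtain ⟨n, hn, hn0⟩ := Submodule.exists_mem_ne_zero_of_ne_bot horth
    have hclosed : IsClosed (affineSpan ℝ C : Set (EuclideanSpace ℝ (Fin 2))) :=
      (affineSpan ℝ C).closed_of_finiteDimensional
    have hsub : closure C ⊆ (affineSpan ℝ C : Set (EuclideanSpace ℝ (Fin 2))) :=
      closure_minimal (subset_affineSpan ℝ C) hclosed
    have haS : a ∈ affineSpan ℝ C := hsub haC
    have key : ∀ x ∈ affineSpan ℝ C, ⟪x - a, n⟫ = 0 := by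
      intro x hx
      have hmem : x - a ∈ (affineSpan ℝ C).direction := by
        have := AffineSubspace.vsub_mem_direction hx haS
        simpa using this
      exact Submodule.inner_right_of_mem_orthogonal hmem hn
    refine ⟨n, hn0, key b (hsub hbC), fun u hu => ?_⟩
    rw [key u (subset_affineSpan ℝ C (subset_convexHull ℝ U hu))]
end

section
/- Let ℓ be the line {x : ⟪x − q, n⟫ = 0} in the Euclidean plane ℝ² (q a point, n a nonzero vector), H = {x : ⟪x − q, n⟫ ≤ 0}, R the orthogonal reflection across ℓ, and F the fold map across ℓ towards H. Let a, b be points with ⟪a − q, n⟫ < 0 and ⟪b − q, n⟫ > 0 (so the fold line crosses the interior of the segment [a,b]). Then the image F '' [a,b] is contained in a line (i.e., the set F '' [a,b] is collinear, so that the fold does not create two distinct non-collinear segments) if and only if b − a is a scalar multiple of n, i.e., if and only if ℓ and the segment [a,b] meet at a right angle. -/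
open RealInnerProductSpace

/-- Suppose the fold line `ℓ = {x : ⟪x - q, n⟫ = 0}` crosses the interior of the
segment `[a,b]` (with `a` strictly inside the half-plane and `b` strictly
outside). Then the folded image `F '' [a,b]` is contained in a line (collinear)
if and only if `b - a` is a scalar multiple of the normal `n`, i.e. iff the
segment meets the fold line at a right angle. -/
theorem fold_image_collinear_iff_perpendicular
    (q n : EuclideanSpace ℝ (Fin 2)) (hn : n ≠ 0)
    (R F : EuclideanSpace ℝ (Fin 2) → EuclideanSpace ℝ (Fin 2))
    (hR : ∀ x, R x = x - (2 * ⟪x - q, n⟫ / ⟪n, n⟫) • n)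
    (hF : ∀ x, F x = if ⟪x - q, n⟫ ≤ 0 then x else R x)
    (a b : EuclideanSpace ℝ (Fin 2))
    (ha : ⟪a - q, n⟫ < 0) (hb : 0 < ⟪b - q, n⟫) :
    Collinear ℝ (F '' segment ℝ a b) ↔ ∃ c : ℝ, b - a = c • n := by
  have hK : (0:ℝ) < ⟪n, n⟫ := by
    rw [real_inner_self_eq_norm_sq]
    exact pow_pos (norm_pos_iff.mpr hn) 2
  have hba : (0:ℝ) < ⟪b - q, n⟫ - ⟪a - q, n⟫ := by linarith
  have expand : ∀ s : ℝ, ⟪a + s • (b - a) - q, n⟫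
      = ⟪a - q, n⟫ + s * (⟪b - q, n⟫ - ⟪a - q, n⟫) := by
    intro s
    have h1 : a + s • (b - a) - q = (a - q) + s • ((b - q) - (a - q)) := by
      have : b - a = (b - q) - (a - q) := by abel
      rw [this]; abel
    rw [h1]
    simp only [inner_add_left, inner_sub_left, real_inner_smul_left]
  constructor
  · intro hcol
    rw [collinear_iff_exists_forall_eq_smul_vadd] at hcol
    obtain ⟨p, v, hpv⟩ := hcol
    set t : ℝ := -⟪a - q, n⟫ / (⟪b - q, n⟫ - ⟪a - q, n⟫) with htdef
    have ht0 : 0 < t := div_pos (by linarith) hba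
    have ht1 : t < 1 := (div_lt_one hba).mpr (by linarith)
    have hm_inner : ⟪a + t • (b - a) - q, n⟫ = 0 := by
      rw [expand t, htdef, div_mul_cancel₀ _ hba.ne']; ring
    have hFa : a ∈ F '' segment ℝ a b :=
      ⟨a, left_mem_segment ℝ a b, by rw [hF, if_pos ha.le]⟩
    have hFm : a + t • (b - a) ∈ F '' segment ℝ a b := by
      refine ⟨a + t • (b - a), ?_, by rw [hF, if_pos hm_inner.le]⟩
      rw [segment_eq_image']
      exact ⟨t, ⟨ht0.le, ht1.le⟩, rfl⟩
    have hFb : R b ∈ F '' segment ℝ a b :=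
      ⟨b, right_mem_segment ℝ a b, by rw [hF, if_neg (not_le.mpr hb)]⟩
    obtain ⟨r1, e1⟩ := hpv a hFa
    obtain ⟨r2, e2⟩ := hpv _ hFm
    obtain ⟨r3, e3⟩ := hpv _ hFb
    simp only [vadd_eq_add] at e1 e2 e3
    rw [hR b] at e3
    have E1 : t • (b - a) = (r2 - r1) • v := by
      linear_combination (norm := module) e2 - e1
    have E2 : (1 - t) • (b - a) - (2 * ⟪b - q, n⟫ / ⟪n, n⟫) • n = (r3 - r2) • v := by
      linear_combination (norm := module) e3 - e2
    have key : (2 * ⟪b - q, n⟫ * t / ⟪n, n⟫) • n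
        = ((1 - t) * (r2 - r1) - t * (r3 - r2)) • v := by
      linear_combination (norm := module) (1 - t) • E1 - t • E2
    set s : ℝ := (1 - t) * (r2 - r1) - t * (r3 - r2) with hsdef
    have hkey2 : 2 * ⟪b - q, n⟫ * t = s * ⟪v, n⟫ := by
      have h1 := congrArg (fun x => ⟪x, n⟫) key
      simp only [real_inner_smul_left] at h1
      rw [div_mul_cancel₀ _ hK.ne'] at h1
      exact h1
    have h2fbt : 2 * ⟪b - q, n⟫ * t ≠ 0 := by positivity
    have hs : s ≠ 0 := by
      intro h0
      rw [h0, zero_mul] at hkey2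
      exact h2fbt hkey2
    have hv : v = (s⁻¹ * (2 * ⟪b - q, n⟫ * t / ⟪n, n⟫)) • n := by
      calc v = s⁻¹ • (s • v) := (inv_smul_smul₀ hs v).symm
        _ = s⁻¹ • ((2 * ⟪b - q, n⟫ * t / ⟪n, n⟫) • n) := by rw [← key]
        _ = (s⁻¹ * (2 * ⟪b - q, n⟫ * t / ⟪n, n⟫)) • n := smul_smul _ _ _
    refine ⟨t⁻¹ * ((r2 - r1) * (s⁻¹ * (2 * ⟪b - q, n⟫ * t / ⟪n, n⟫))), ?_⟩
    calc b - a = t⁻¹ • (t • (b - a)) := (inv_smul_smul₀ ht0.ne' _).symm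
      _ = t⁻¹ • ((r2 - r1) • v) := by rw [E1]
      _ = _ := by rw [hv, smul_smul, smul_smul]; module
  · rintro ⟨c, hc⟩
    rw [collinear_iff_exists_forall_eq_smul_vadd]
    refine ⟨a, n, ?_⟩
    rintro y ⟨x, hx, rfl⟩
    rw [segment_eq_image'] at hx
    obtain ⟨θ, hθ, rfl⟩ := hx
    rw [hF]
    split_ifs with h
    · refine ⟨θ * c, ?_⟩
      rw [hc, vadd_eq_add]
      module
    · rw [hR]
      refine ⟨θ * c - 2 * ⟪a + θ • (b - a) - q, n⟫ / ⟪n, n⟫, ?_⟩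
      rw [hc, vadd_eq_add]
      module
end

section
/- Let ℓ be the line {x : ⟪x − q, n⟫ = 0} in the Euclidean plane ℝ² (q a point, n a nonzero vector), H = {x : ⟪x − q, n⟫ ≤ 0}, R the orthogonal reflection across ℓ, and F the fold map across ℓ towards H. Let a, b be points such that the line ℓ does not meet the open segment between a and b (i.e., the fold line does not stab the segment). Then F '' [a,b] = [F a, F b]: the fold maps the segment onto the segment between the images of its endpoints, so the segment is not split into two. -/
open RealInnerProductSpace

/-! The level function `x ↦ ⟪x - q, n⟫` is affine, so it maps the open segment onto the open
interval between its values at `a` and `b`; as it does not vanish there, these values cannot have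
opposite strict signs. Hence all of `[a,b]` lies in one closed half-plane, on which the fold agrees
with an affine map (the identity, or the reflection, which fixes `ℓ` pointwise), and affine maps
send segments onto segments. -/

section Segment

variable {E F : Type*} [AddCommGroup E] [Module ℝ E] [AddCommGroup F] [Module ℝ F]

theorem AffineMap.nonpos_or_nonneg_of_ne_zero_on_openSegment (φ : E →ᵃ[ℝ] ℝ) {a b : E}
    (h : ∀ x ∈ openSegment ℝ a b, φ x ≠ 0) :
    (φ a ≤ 0 ∧ φ b ≤ 0) ∨ (0 ≤ φ a ∧ 0 ≤ φ b) := by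
  by_contra! hsign
  have hzero : (0 : ℝ) ∈ openSegment ℝ (φ a) (φ b) := by
    rw [openSegment_eq_Ioo' (by grind)]
    constructor <;> grind
  rw [← image_openSegment] at hzero
  obtain ⟨x, hx, hφx⟩ := hzero
  exact h x hx hφx

theorem image_segment_piecewise_affine (φ : E →ᵃ[ℝ] ℝ) (f g : E →ᵃ[ℝ] F)
    (hfg : ∀ x, φ x = 0 → f x = g x) {a b : E} (h : ∀ x ∈ openSegment ℝ a b, φ x ≠ 0) :
    (fun x => if φ x ≤ 0 then f x else g x) '' segment ℝ a b =
      segment ℝ (if φ a ≤ 0 then f a else g a) (if φ b ≤ 0 then f b else g b) := by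
  rcases φ.nonpos_or_nonneg_of_ne_zero_on_openSegment h with ⟨ha, hb⟩ | ⟨ha, hb⟩
  · have hseg : segment ℝ a b ⊆ φ ⁻¹' Set.Iic 0 :=
      (convex_Iic 0).affine_preimage φ |>.segment_subset ha hb
    rw [Set.image_congr (g := f) fun x hx => if_pos (show φ x ≤ 0 from hseg hx), if_pos ha,
      if_pos hb, image_segment]
  · have hseg : segment ℝ a b ⊆ φ ⁻¹' Set.Ici 0 :=
      (convex_Ici 0).affine_preimage φ |>.segment_subset ha hb
    have hg : ∀ x, 0 ≤ φ x → (if φ x ≤ 0 then f x else g x) = g x := fun x hx => by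
      split_ifs with hx'
      exacts [hfg x (le_antisymm hx' hx), rfl]
    rw [Set.image_congr (g := g) fun x hx => hg x (hseg hx), hg a ha, hg b hb, image_segment]

end Segment

namespace HyperplaneFold

variable {E : Type*} [NormedAddCommGroup E] [InnerProductSpace ℝ E] (q n : E)

noncomputable def level : E →ᵃ[ℝ] ℝ :=
  (innerₛₗ ℝ n).toAffineMap - AffineMap.const ℝ E ⟪n, q⟫

@[simp]
theorem level_apply (x : E) : level q n x = ⟪x - q, n⟫ := by
  simp [level, inner_sub_left, real_inner_comm]

noncomputable def reflection : E →ᵃ[ℝ] E :=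
  AffineMap.id ℝ E - (2 / ⟪n, n⟫) • (LinearMap.toSpanSingleton ℝ E n).toAffineMap.comp (level q n)

theorem reflection_apply (x : E) :
    reflection q n x = x - (2 * ⟪x - q, n⟫ / ⟪n, n⟫) • n := by
  simp [reflection, smul_smul, mul_div_right_comm]

theorem reflection_apply_of_level_eq_zero {x : E} (hx : level q n x = 0) :
    reflection q n x = x := by
  simp_all [reflection_apply]

end HyperplaneFold

open HyperplaneFold

theorem fold_of_nonstabbed_segment_general
    (q n : EuclideanSpace ℝ (Fin 2))
    (R F : EuclideanSpace ℝ (Fin 2) → EuclideanSpace ℝ (Fin 2))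
    (hR : ∀ x, R x = x - (2 * ⟪x - q, n⟫ / ⟪n, n⟫) • n)
    (hF : ∀ x, F x = if ⟪x - q, n⟫ ≤ 0 then x else R x)
    (a b : EuclideanSpace ℝ (Fin 2))
    (hmiss : ∀ t : ℝ, 0 < t → t < 1 →
      ⟪((1 - t) • a + t • b) - q, n⟫ ≠ 0) :
    F '' segment ℝ a b = segment ℝ (F a) (F b) := by
  have hF_eq : F = fun x => if level q n x ≤ 0 then AffineMap.id ℝ _ x else reflection q n x := by
    funext x
    rw [hF, hR, level_apply, reflection_apply, AffineMap.id_apply]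
  have hlevel_ne : ∀ x ∈ openSegment ℝ a b, level q n x ≠ 0 := by
    rintro _ ⟨u, t, hu, ht, hut, rfl⟩
    rw [level_apply, eq_sub_of_add_eq hut]
    exact hmiss t ht (by linarith)
  rw [hF_eq]
  exact image_segment_piecewise_affine _ _ _
    (fun x hx => (reflection_apply_of_level_eq_zero q n hx).symm) hlevel_ne

/-- If the fold line `ℓ = {x : ⟪x - q, n⟫ = 0}` does not meet the open segment
between `a` and `b` (the fold line does not stab the segment), then the fold
map `F` sends the segment `[a,b]` onto the segment `[F a, F b]`: the segment is
not split into two. -/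
theorem fold_of_nonstabbed_segment
    (q n : EuclideanSpace ℝ (Fin 2)) (hn : n ≠ 0)
    (R F : EuclideanSpace ℝ (Fin 2) → EuclideanSpace ℝ (Fin 2))
    (hR : ∀ x, R x = x - (2 * ⟪x - q, n⟫ / ⟪n, n⟫) • n)
    (hF : ∀ x, F x = if ⟪x - q, n⟫ ≤ 0 then x else R x)
    (a b : EuclideanSpace ℝ (Fin 2))
    (hmiss : ∀ t : ℝ, 0 < t → t < 1 →
      ⟪((1 - t) • a + t • b) - q, n⟫ ≠ 0) :
    F '' segment ℝ a b = segment ℝ (F a) (F b) :=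
  fold_of_nonstabbed_segment_general q n R F hR hF a b hmiss
end
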